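/- arXiv:0805.1916 — 3 statements merged into one kernel-verified Lean document; each statement's English description precedes it below -/
import Mathlib

section
/- The natural projection π_m from the analytification of affine m-space A^m — the space of multiplicative seminorms on the polynomial ring K[x_1, ..., x_m] compatible with ν, equipped with the coarsest topology making x ↦ |f|_x continuous for every polynomial f — to R̄^m given by x ↦ (−log|x_1|_x, ..., −log|x_m|_x) (with −log 0 = ∞) is a proper continuous map: the preimage of every compact subset of R̄^m is compact. -/
open scoped BigOperators Classical

noncomputable section

/-- The extended real line `R̄ = ℝ ∪ {∞}`. -/
abbrev Rbar : Type := WithTop ℝ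

/-- The map `a ↦ exp (−a)`, sending `∞` to `0`. -/
def expNeg (t : Rbar) : ℝ := if h : t = ⊤ then 0 else Real.exp (-(t.untop h))

/-- The topology on `R̄` in which `ℝ` carries its usual topology and the completed rays
`(a, ∞]` are a basis of neighborhoods of `∞`; equivalently, the topology induced by the
injection `expNeg : R̄ → ℝ`, which is a homeomorphism onto `[0, ∞)`. -/
instance : TopologicalSpace Rbar := TopologicalSpace.induced expNeg inferInstance

/-- `−log r`, with `−log 0 = ∞`. -/
def negLog (r : ℝ) : Rbar := if r = 0 then ⊤ else (((-Real.log r : ℝ)) : Rbar)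

/-- `ν : K → ℝ ∪ {∞}` is a (nonarchimedean) valuation: `ν(0) = ∞`,
`ν(ab) = ν(a) + ν(b)`, and `ν(a + b) ≥ min (ν a) (ν b)`. -/
structure IsVal {K : Type} [Field K] (ν : K → Rbar) : Prop where
  map_zero : ν 0 = ⊤
  map_mul : ∀ a b : K, ν (a * b) = ν a + ν b
  min_le_add : ∀ a b : K, min (ν a) (ν b) ≤ ν (a + b)

/-- The valuation `ν` is nontrivial: `ν(K*) ≠ {0}`. -/
def IsNontrivialVal {K : Type} [Field K] (ν : K → Rbar) : Prop :=
  ∃ a : K, a ≠ 0 ∧ ν a ≠ 0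

/-- The trivial valuation on a field `k`: `ν(a) = 0` for `a ≠ 0` and `ν(0) = ∞`. -/
def nuTriv (k : Type) [Field k] : k → Rbar := fun a => if a = 0 then ⊤ else 0

/-- `K` is complete with respect to the valuation `ν`, i.e. with respect to the induced
nonarchimedean absolute value `expNeg ∘ ν`: every Cauchy sequence converges. -/
def VComplete {K : Type} [Field K] (ν : K → Rbar) : Prop :=
  ∀ s : ℕ → K,
    (∀ ε : ℝ, 0 < ε → ∃ N : ℕ, ∀ p ≥ N, ∀ q ≥ N, expNeg (ν (s p - s q)) < ε) →
    ∃ L : K, ∀ ε : ℝ, 0 < ε → ∃ N : ℕ, ∀ p ≥ N, expNeg (ν (s p - L)) < ε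

/-- A multiplicative seminorm on a commutative ring `A`: a nonnegative real-valued
function with `|0| = 0`, `|1| = 1`, `|fg| = |f|·|g|` and `|f + g| ≤ |f| + |g|`. -/
structure IsMultSeminorm {A : Type} [CommRing A] (p : A → ℝ) : Prop where
  nonneg : ∀ f, 0 ≤ p f
  map_zero : p 0 = 0
  map_one : p 1 = 1
  map_mul : ∀ f g, p (f * g) = p f * p g
  add_le : ∀ f g, p (f + g) ≤ p f + p g

/-- A seminorm on the `K`-algebra `A` is compatible with `ν` if `|a| = exp(−ν(a))` for
every scalar `a ∈ K`. -/
def Compat {K A : Type} [Field K] [CommRing A] [Algebra K A] (ν : K → Rbar) (p : A → ℝ) :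
    Prop :=
  ∀ a : K, p (algebraMap K A a) = expNeg (ν a)

/-- The analytification `X^an` of the affine variety `X = Spec A` over the complete
nonarchimedean field `(K, ν)`: the set of multiplicative seminorms on `A` compatible with
`ν`, topologized (as a subset of `A → ℝ` with the product topology) by the coarsest
topology making `x ↦ |f|_x` continuous for every `f ∈ A`. -/
def Xan (K A : Type) [Field K] [CommRing A] [Algebra K A] (ν : K → Rbar) : Set (A → ℝ) :=
  {p | IsMultSeminorm p ∧ Compat ν p}

/-- The analytification `X^an` over a trivially valued field `k`: the set of
multiplicative seminorms on `A` that are equal to `1` on `k*`, with the topology of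
pointwise convergence. -/
def XanTriv (k A : Type) [Field k] [CommRing A] [Algebra k A] : Set (A → ℝ) :=
  {p | IsMultSeminorm p ∧ ∀ a : k, a ≠ 0 → p (algebraMap k A a) = 1}

/-- The projection `π_ι : X^an → R̄^m` attached to the affine embedding `ι` given by the
generators `f 0, ..., f (m-1)` of `A`: `x ↦ (−log|f 0|_x, ..., −log|f (m-1)|_x)`. -/
def piIota {K A : Type} [Field K] [CommRing A] [Algebra K A] (ν : K → Rbar) {m : ℕ}
    (f : Fin m → A) (x : ↥(Xan K A ν)) : Fin m → Rbar :=
  fun i => negLog (x.1 (f i))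

/-- The projection `π_ι : X^an → R̄^m` for a trivially valued base field. -/
def piIotaTriv {k A : Type} [Field k] [CommRing A] [Algebra k A] {m : ℕ}
    (f : Fin m → A) (x : ↥(XanTriv k A)) : Fin m → Rbar :=
  fun i => negLog (x.1 (f i))

/-- The tropicalization `Trop(X, ι)` of the affine embedding `ι : X ↪ A^m` of
`X = Spec A` given by the generators `f` of `A`: the closure in `R̄^m` of the set of
coordinatewise valuations of the `K`-points of `X`. -/
def TropX {K A : Type} [Field K] [CommRing A] [Algebra K A] (ν : K → Rbar) {m : ℕ}
    (f : Fin m → A) : Set (Fin m → Rbar) :=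
  closure {v | ∃ φ : A →ₐ[K] K, v = fun i => ν (φ (f i))}

/-- The tropicalization `Trop(φ) : R̄^m → R̄^n` of the equivariant morphism
`φ : A^m → A^n` whose coordinates are `y_j ↦ c_j · x^{a_j}`, namely
`v ↦ (ν(c_1) + ⟨a_1, v⟩, ..., ν(c_n) + ⟨a_n, v⟩)`, with the conventions `ν(0) = ∞`,
`∞ + t = ∞`, `a_i · ∞ = ∞` for `a_i > 0`, and `0 · ∞ = 0`. -/
def tropMap {K : Type} [Field K] (ν : K → Rbar) {m n : ℕ} (c : Fin n → K)
    (a : Fin n → Fin m → ℕ) (v : Fin m → Rbar) : Fin n → Rbar :=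
  fun j => ν (c j) + ∑ i, (a j i) • v i

/-- The affine embeddings of `X = Spec A`: an embedding `ι : X ↪ A^m` is a tuple of
generators of `A` as a `K`-algebra. -/
def AffEmb (K A : Type) [Field K] [CommRing A] [Algebra K A] : Type :=
  Σ m : ℕ, {f : Fin m → A // Algebra.adjoin K (Set.range f) = ⊤}

/-- The map `X^an → Π_ι R̄^{m(ι)}`, `x ↦ (π_ι(x))_ι`, over all affine embeddings `ι`. -/
def bigMap (K A : Type) [Field K] [CommRing A] [Algebra K A] (ν : K → Rbar)
    (x : ↥(Xan K A ν)) : ∀ e : AffEmb K A, Fin e.1 → Rbar :=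
  fun e => piIota ν e.2.1 x

/-- The inverse limit `varprojlim Trop(X, ι)`, realized inside `Π_ι R̄^{m(ι)}`: families
`(y_ι)` with `y_ι ∈ Trop(X, ι)` for all `ι` and `y_ȷ = Trop(φ)(y_ι)` for every
equivariant morphism `φ : A^{m(ι)} → A^{m(ȷ)}` with `ȷ = φ ∘ ι`. -/
def limitSet (K A : Type) [Field K] [CommRing A] [Algebra K A] (ν : K → Rbar) :
    Set (∀ e : AffEmb K A, Fin e.1 → Rbar) :=
  {y | (∀ e : AffEmb K A, y e ∈ TropX ν e.2.1) ∧
    ∀ (e e' : AffEmb K A) (c : Fin e'.1 → K) (a : Fin e'.1 → Fin e.1 → ℕ),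
      (∀ j, e'.2.1 j = algebraMap K A (c j) * ∏ i, (e.2.1 i) ^ (a j i)) →
      y e' = tropMap ν c a (y e)}

/-- The ring of Laurent polynomials `K[x_1^{±1}, ..., x_m^{±1}]`, i.e. the group algebra
of `ℤ^m` over `K`. -/
abbrev Laur (K : Type) [Field K] (m : ℕ) : Type := AddMonoidAlgebra K (Fin m → ℤ)

/-- Evaluation of a Laurent polynomial at a point `y ∈ K^m` (meaningful when the
relevant coordinates of `y` are invertible). -/
def lEval {K : Type} [Field K] {m : ℕ} (y : Fin m → K) (g : Laur K m) : K :=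
  ∑ u ∈ g.coeff.support, g.coeff u * ∏ i, (y i) ^ (u i)

/-- The tropical minimum of the Laurent polynomial `f` at `v ∈ ℝ^m` is attained twice:
the minimum of `ν(a_u) + ⟨u, v⟩` over `u ∈ supp(f)` is achieved by at least two distinct
`u ∈ supp(f)`.  (Equivalently, the initial form of `f` at `v` is not a monomial.) -/
def MinTwice {K : Type} [Field K] {m : ℕ} (ν : K → Rbar) (f : Laur K m) (v : Fin m → ℝ) :
    Prop :=
  ∃ u ∈ f.coeff.support, ∃ u' ∈ f.coeff.support, u ≠ u' ∧
    ν (f.coeff u) + ((∑ i, (u i : ℝ) * v i : ℝ) : Rbar)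
      = ν (f.coeff u') + ((∑ i, (u' i : ℝ) * v i : ℝ) : Rbar) ∧
    ∀ w ∈ f.coeff.support,
      ν (f.coeff u) + ((∑ i, (u i : ℝ) * v i : ℝ) : Rbar)
        ≤ ν (f.coeff w) + ((∑ i, (w i : ℝ) * v i : ℝ) : Rbar)

/-- With the trivial valuation: the minimum of `⟨u, w⟩` over `supp g` is attained by at
least two distinct `u ∈ supp g`. -/
def MinTwiceTriv {k : Type} [Field k] {m : ℕ} (g : Laur k m) (w : Fin m → ℝ) : Prop :=
  ∃ u ∈ g.coeff.support, ∃ u' ∈ g.coeff.support, u ≠ u' ∧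
    (∑ i, (u i : ℝ) * w i) = (∑ i, (u' i : ℝ) * w i) ∧
    ∀ z ∈ g.coeff.support, (∑ i, (u i : ℝ) * w i) ≤ ∑ i, (z i : ℝ) * w i

/-- The tropicalization `T_trop(J)` of an ideal of Laurent polynomials: the set of
`v ∈ ℝ^m` such that for every nonzero `f ∈ J` the tropical minimum of `f` at `v` is
attained twice. -/
def Ttrop {K : Type} [Field K] {m : ℕ} (ν : K → Rbar) (J : Ideal (Laur K m)) :
    Set (Fin m → ℝ) :=
  {v | ∀ f ∈ J, f ≠ 0 → MinTwice ν f v}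

/-- The `K`-points of the closed subvariety of the torus `T^m` cut out by the ideal `I`:
points of `(K*)^m` at which every element of `I` vanishes. -/
def torusPoints {K : Type} [Field K] {m : ℕ} (I : Ideal (Laur K m)) :
    Set (Fin m → Kˣ) :=
  {y | ∀ f ∈ I, lEval (fun i => (y i : K)) f = 0}

/-- The real number `ν(a)` (with junk value `0` when `ν(a) = ∞`, i.e. when `a = 0`). -/
def vR {K : Type} [Field K] (ν : K → Rbar) (a : K) : ℝ := (ν a).untopD 0

/-- The set `{trop(y) : y ∈ X(K)} ⊆ ℝ^m` of coordinatewise valuations of the `K`-points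
of the closed subvariety of the torus cut out by `I`; `trop(X)` is its closure. -/
def tropImg {K : Type} [Field K] {m : ℕ} (ν : K → Rbar) (I : Ideal (Laur K m)) :
    Set (Fin m → ℝ) :=
  {w | ∃ y ∈ torusPoints I, w = fun i => vR ν ((y i : Kˣ) : K)}

/-- The `K`-points of the closed subvariety of `A^m` cut out by the ideal `J`. -/
def affPoints {K : Type} [Field K] {m : ℕ} (J : Ideal (MvPolynomial (Fin m) K)) :
    Set (Fin m → K) :=
  {y | ∀ f ∈ J, MvPolynomial.eval y f = 0}

/-- The extended tropicalization in `R̄^m` of a set of points of `A^m(K)`: the closure of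
the set of coordinatewise valuations. -/
def TropAff {K : Type} [Field K] {m : ℕ} (ν : K → Rbar) (S : Set (Fin m → K)) :
    Set (Fin m → Rbar) :=
  closure {v | ∃ y ∈ S, v = fun i => ν (y i)}

/-- The coefficientwise extension map
`k[x_1^{±1}, ..., x_m^{±1}] → K[x_1^{±1}, ..., x_m^{±1}]` along `algebraMap k K`. -/
def laurExt (k K : Type) [Field k] [Field K] [Algebra k K] (m : ℕ) :
    Laur k m →ₐ[k] Laur K m :=
  (AddMonoidAlgebra.lift k (Laur K m) (Fin m → ℤ)) (AddMonoidAlgebra.of K (Fin m → ℤ))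

/-- The `i`-th coordinate function `x_i` in the coordinate ring
`k[X] = k[x_1^{±1}, ..., x_m^{±1}] / I` of a closed subvariety of the torus. -/
def coordLaur {k : Type} [Field k] {m : ℕ} (I : Ideal (Laur k m)) (i : Fin m) :
    Laur k m ⧸ I :=
  Ideal.Quotient.mk I (AddMonoidAlgebra.single (Pi.single i (1 : ℤ)) (1 : k))

/-- The projection `π : X^an → ℝ^m`, `x ↦ (−log|x_1|_x, ..., −log|x_m|_x)`, for a closed
subvariety of the torus over a trivially valued field. -/
def piTorus {k : Type} [Field k] {m : ℕ} (I : Ideal (Laur k m))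
    (x : ↥(XanTriv k (Laur k m ⧸ I))) : Fin m → ℝ :=
  fun i => -Real.log (x.1 (coordLaur I i))

/-- `trop(X)` for a closed subvariety of the torus over a trivially valued field: the
set of `v ∈ ℝ^m` such that for every nonzero `f ∈ I` the minimum of `⟨u, v⟩` over
`supp f` is attained at least twice. -/
def tropTrivTorus {k : Type} [Field k] {m : ℕ} (I : Ideal (Laur k m)) :
    Set (Fin m → ℝ) :=
  {v | ∀ f ∈ I, f ≠ 0 → MinTwiceTriv f v}

/-- The vanishing ideal of `X ∩ T^{I₀}` for the affine embedding of `X = Spec A` given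
by generators `f`: Laurent polynomials in the variables `x_i`, `i ∈ I₀` (support
condition), vanishing at every `k`-point `y` of `X` with `y_i ≠ 0` iff `i ∈ I₀`. -/
def stratVanishing (k A : Type) [Field k] [CommRing A] [Algebra k A] {m : ℕ}
    (f : Fin m → A) (I0 : Finset (Fin m)) : Set (Laur k m) :=
  {g | (∀ u ∈ g.coeff.support, ∀ i, i ∉ I0 → u i = 0) ∧
    ∀ φ : A →ₐ[k] k, (∀ i, φ (f i) ≠ 0 ↔ i ∈ I0) → lEval (fun i => φ (f i)) g = 0}

/-- The extended tropicalization `Trop(X, ι) ⊆ R̄^m` over a trivially valued field: the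
union over `I₀ ⊆ {1, ..., m}` of the sets `trop(X ∩ T^{I₀})`, each embedded in the
stratum `ℝ^{I₀} = {v : v_i < ∞ iff i ∈ I₀}` (coordinates `∞` off `I₀`). -/
def TropStrat (k A : Type) [Field k] [CommRing A] [Algebra k A] {m : ℕ}
    (f : Fin m → A) : Set (Fin m → Rbar) :=
  {v | ∃ (I0 : Finset (Fin m)) (w : Fin m → ℝ),
        (v = fun i => if i ∈ I0 then ((w i : ℝ) : Rbar) else ⊤) ∧
        ∀ g ∈ stratVanishing k A f I0, g ≠ 0 → MinTwiceTriv g w}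

/-- The map `X^an → Π_ι R̄^{m(ι)}` over a trivially valued field. -/
def bigMapTriv (k A : Type) [Field k] [CommRing A] [Algebra k A]
    (x : ↥(XanTriv k A)) : ∀ e : AffEmb k A, Fin e.1 → Rbar :=
  fun e => piIotaTriv e.2.1 x

/-- The inverse limit `varprojlim Trop(X, ι)` over a trivially valued field, realized
inside `Π_ι R̄^{m(ι)}`. -/
def limitSetTriv (k A : Type) [Field k] [CommRing A] [Algebra k A] :
    Set (∀ e : AffEmb k A, Fin e.1 → Rbar) :=
  {y | (∀ e : AffEmb k A, y e ∈ TropStrat k A e.2.1) ∧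
    ∀ (e e' : AffEmb k A) (c : Fin e'.1 → k) (a : Fin e'.1 → Fin e.1 → ℕ),
      (∀ j, e'.2.1 j = algebraMap k A (c j) * ∏ i, (e.2.1 i) ^ (a j i)) →
      y e' = tropMap (nuTriv k) c a (y e)}


/-- The projection `π_m : (A^m)^an → R̄^m`, `x ↦ (−log|x_1|_x, ..., −log|x_m|_x)`. -/
def piAm (K : Type) [Field K] (ν : K → Rbar) (m : ℕ)
    (x : ↥(Xan K (MvPolynomial (Fin m) K) ν)) : Fin m → Rbar :=
  fun i => negLog (x.1 (MvPolynomial.X i))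
/-! A compatible multiplicative seminorm is bounded on each polynomial `f = ∑ a_u x^u` by
`∑ |a_u| ∏ |x_i|^{u_i}`. Over a compact `C ⊆ R̄^σ` the numbers `|x_i| = exp (−v_i)` are bounded,
so the preimage of `C` lies in a product of compact intervals `∏_f [0, M_f]` (Tychonoff); it is
closed there, since the seminorm axioms and compatibility are pointwise closed conditions and
the projection is continuous. -/

open MvPolynomial

lemma expNeg_nonneg (t : Rbar) : 0 ≤ expNeg t := by
  unfold expNeg
  split
  · exact le_rfl
  · exact (Real.exp_pos _).le

lemma expNeg_injective : Function.Injective expNeg := by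
  intro s t hst
  induction s using WithTop.recTopCoe with
  | top =>
    induction t using WithTop.recTopCoe with
    | top => rfl
    | coe t => simp [expNeg, (Real.exp_pos _).ne] at hst
  | coe s =>
    induction t using WithTop.recTopCoe with
    | top => simp [expNeg, (Real.exp_pos _).ne'] at hst
    | coe t => simpa [expNeg] using hst

lemma expNeg_negLog (r : ℝ) : expNeg (negLog r) = |r| := by
  by_cases hr : r = 0
  · simp [negLog, expNeg, hr]
  · rw [negLog, if_neg hr, expNeg, dif_neg WithTop.coe_ne_top, WithTop.untop_coe, neg_neg,
      ← Real.log_abs, Real.exp_log (abs_pos.mpr hr)]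

lemma continuous_expNeg : Continuous expNeg := continuous_induced_dom

@[fun_prop]
lemma continuous_negLog : Continuous negLog :=
  continuous_induced_rng.2 <| by
    simpa only [Function.comp_def, expNeg_negLog] using continuous_abs

instance : T2Space Rbar := Topology.IsEmbedding.t2Space ⟨⟨rfl⟩, expNeg_injective⟩

namespace IsMultSeminorm

variable {A : Type} [CommRing A] {p : A → ℝ}

def toMonoidHom (hp : IsMultSeminorm p) : A →* ℝ where
  toFun := p
  map_one' := hp.map_one
  map_mul' := hp.map_mul

lemma map_sum_le (hp : IsMultSeminorm p) {ι : Type*} (s : Finset ι) (g : ι → A) :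
    p (∑ i ∈ s, g i) ≤ ∑ i ∈ s, p (g i) :=
  Finset.le_sum_of_subadditive p hp.map_zero.le hp.add_le s g

variable (A) in
lemma isClosed_setOf : IsClosed {p : A → ℝ | IsMultSeminorm p} := by
  have h : {p : A → ℝ | IsMultSeminorm p} = {p | ∀ f, 0 ≤ p f} ∩ {p | p 0 = 0} ∩ {p | p 1 = 1}
      ∩ {p | ∀ f g, p (f * g) = p f * p g} ∩ {p | ∀ f g, p (f + g) ≤ p f + p g} := by
    ext p
    exact ⟨fun ⟨h0, h1, h2, h3, h4⟩ => ⟨⟨⟨⟨h0, h1⟩, h2⟩, h3⟩, h4⟩,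
      fun ⟨⟨⟨⟨h0, h1⟩, h2⟩, h3⟩, h4⟩ => ⟨h0, h1, h2, h3, h4⟩⟩
  rw [h]
  refine IsClosed.inter (IsClosed.inter (IsClosed.inter (IsClosed.inter ?_
    (isClosed_setOfPred_map_zero A ℝ)) (isClosed_setOfPred_map_one A ℝ))
    (isClosed_setOfPred_map_mul A ℝ)) ?_
  · simp only [Set.ofPred_forall]
    exact isClosed_iInter fun f => isClosed_le continuous_const (continuous_apply f)
  · simp only [Set.ofPred_forall]
    exact isClosed_iInter fun f => isClosed_iInter fun g =>
      isClosed_le (continuous_apply _) (by fun_prop)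

end IsMultSeminorm

lemma isClosed_Xan (K A : Type) [Field K] [CommRing A] [Algebra K A] (ν : K → Rbar) :
    IsClosed (Xan K A ν) := by
  show IsClosed ({p | IsMultSeminorm p} ∩ {p : A → ℝ | ∀ a, p (algebraMap K A a) = expNeg (ν a)})
  refine (IsMultSeminorm.isClosed_setOf A).inter ?_
  simp only [Set.ofPred_forall]
  exact isClosed_iInter fun a => isClosed_eq (continuous_apply _) continuous_const

section Polynomial

variable {K σ : Type} [Field K] {ν : K → Rbar} {p : MvPolynomial σ K → ℝ}

lemma apply_monomial_of_mem_Xan (hp : p ∈ Xan K (MvPolynomial σ K) ν) (u : σ →₀ ℕ) (a : K) :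
    p (monomial u a) = expNeg (ν a) * u.prod fun i e => p (X i) ^ e := by
  rw [monomial_eq, hp.1.map_mul, C_eq_algebraMap, hp.2 a]
  exact congrArg _ (map_finsuppProd hp.1.toMonoidHom _ _ |>.trans
    (Finsupp.prod_congr fun i _ => map_pow hp.1.toMonoidHom _ _))

lemma apply_le_of_mem_Xan_of_apply_X_le (hp : p ∈ Xan K (MvPolynomial σ K) ν) {B : σ → ℝ}
    (hB : ∀ i, p (X i) ≤ B i) (f : MvPolynomial σ K) :
    p f ≤ ∑ u ∈ f.support, expNeg (ν (coeff u f)) * u.prod fun i e => B i ^ e := by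
  calc p f = p (∑ u ∈ f.support, monomial u (coeff u f)) := by rw [← f.as_sum]
    _ ≤ ∑ u ∈ f.support, p (monomial u (coeff u f)) := hp.1.map_sum_le _ _
    _ ≤ _ := by
      refine Finset.sum_le_sum fun u _ => ?_
      rw [apply_monomial_of_mem_Xan hp]
      refine mul_le_mul_of_nonneg_left ?_ (expNeg_nonneg _)
      exact Finset.prod_le_prod (fun i _ => pow_nonneg (hp.1.nonneg _) _)
        fun i _ => pow_le_pow_left₀ (hp.1.nonneg _) (hB i) _

lemma isCompact_Xan_inter_preimage {C : Set (σ → Rbar)} (hC : IsCompact C) :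
    IsCompact (Xan K (MvPolynomial σ K) ν ∩ (fun p i => negLog (p (X i))) ⁻¹' C) := by
  choose B hB using fun i =>
    (hC.image (continuous_expNeg.comp (continuous_apply i))).bddAbove
  refine (isCompact_univ_pi fun f => isCompact_Icc (a := 0)
    (b := ∑ u ∈ f.support, expNeg (ν (coeff u f)) * u.prod fun i e => B i ^ e)).of_isClosed_subset
    ((isClosed_Xan K _ ν).inter (hC.isClosed.preimage (by fun_prop))) ?_
  rintro p ⟨hp, hpC⟩ f -
  refine ⟨hp.1.nonneg f, apply_le_of_mem_Xan_of_apply_X_le hp (fun i => ?_) f⟩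
  have := hB i ⟨_, hpC, rfl⟩
  rwa [Function.comp_apply, expNeg_negLog, abs_of_nonneg (hp.1.nonneg _)] at this

end Polynomial

theorem stmt1_general {K : Type} [Field K]
    (ν : K → Rbar)
    (m : ℕ) :
    Continuous (piAm K ν m) ∧
      ∀ C : Set (Fin m → Rbar), IsCompact C → IsCompact (piAm K ν m ⁻¹' C) := by
  refine ⟨continuous_pi fun i => continuous_negLog.comp <| (continuous_apply _).comp
    continuous_subtype_val, fun C hC => ?_⟩
  have h := isCompact_Xan_inter_preimage (K := K) (ν := ν) hC
  rwa [← Subtype.image_preimage_coe, ← Topology.IsEmbedding.subtypeVal.isCompact_iff] at h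

/-- Lemma 2.1.  The natural projection `π_m` from the analytification
of affine `m`-space to `R̄^m` is a proper continuous map: it is continuous and the
preimage of every compact subset of `R̄^m` is compact. -/
theorem stmt1 {K : Type} [Field K] [IsAlgClosed K]
    (ν : K → Rbar) (hν : IsVal ν) (hnt : IsNontrivialVal ν) (hcomp : VComplete ν)
    (m : ℕ) :
    Continuous (piAm K ν m) ∧
      ∀ C : Set (Fin m → Rbar), IsCompact C → IsCompact (piAm K ν m ⁻¹' C) :=
  stmt1_general ν m

end
end

section
/- Let k ⊆ K be algebraically closed fields with valuations ν_k on k and ν on K extending ν_k (neither field assumed complete, the valuations possibly trivial). Then for every nonzero Laurent polynomial f ∈ k[x_1^{±1}, ..., x_m^{±1}], the tropicalization of the hypersurface it defines over k is contained in the tropicalization of the hypersurface it defines over K: T_trop(f·k[x_1^{±1}, ..., x_m^{±1}]) ⊆ T_trop(f·K[x_1^{±1}, ..., x_m^{±1}]). -/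
open scoped BigOperators Classical

noncomputable section

/-! The tropical minimum of `f` at `v` only involves the values `νk (a_u) = ν (a_u)`, so it is
attained twice for `f` over `K` as well, and every nonzero element of the ideal is `g * f` with
`g ≠ 0`. Let `A` and `B` be the exponents at which the minima for `g` and `f` are attained. If
`(a, b) ∈ A × B` is the only way to write `a + b` as a sum of an element of `A` and one of `B`,
then `g_a f_b` is the strictly dominant term of the coefficient of `x^(a+b)` in `g * f`, so the
minimum for `g * f` is attained at `a + b`. Since `ℤ^m` has `TwoUniqueSums` and `B` has at least
two elements, there are two such pairs, with distinct sums. -/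

theorem laurExt_eq_mapAlgHom (k K : Type) [Field k] [Field K] [Algebra k K] (m : ℕ) :
    laurExt k K m = AddMonoidAlgebra.mapAlgHom (Fin m → ℤ) (Algebra.ofId k K) :=
  AddMonoidAlgebra.algHom_ext (fun u => by simp [laurExt]) (Subsingleton.elim _ _)

theorem coeff_laurExt {k K : Type} [Field k] [Field K] [Algebra k K] {m : ℕ}
    (f : Laur k m) (u : Fin m → ℤ) :
    (laurExt k K m f).coeff u = algebraMap k K (f.coeff u) := by
  rw [laurExt_eq_mapAlgHom, AddMonoidAlgebra.coeff_mapAlgHom]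
  rfl

theorem support_laurExt {k K : Type} [Field k] [Field K] [Algebra k K] {m : ℕ}
    (f : Laur k m) : (laurExt k K m f).coeff.support = f.coeff.support := by
  ext u
  simp [coeff_laurExt]

namespace IsVal

variable {K : Type} [Field K] {ν : K → Rbar}

theorem map_one_eq_zero_or_forall_eq_top (hν : IsVal ν) : ν 1 = 0 ∨ ∀ a, ν a = ⊤ := by
  by_cases h1 : ν 1 = ⊤
  · exact Or.inr fun a => by rw [← mul_one a, hν.map_mul, h1, add_top]
  · refine Or.inl ((add_right_inj_of_ne_top h1).1 ?_).symm
    rw [← hν.map_mul, mul_one, add_zero]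

def toAddValuation (hν : IsVal ν) (h1 : ν 1 = 0) : AddValuation K Rbar :=
  AddValuation.of ν hν.map_zero h1 hν.min_le_add hν.map_mul

end IsVal

theorem AddValuation.le_map_sum_add_coe {K : Type} [Field K] (w : AddValuation K Rbar)
    {ι : Type*} {s : Finset ι} {t : ι → K} {θ : Rbar} {r : ℝ}
    (h : ∀ i ∈ s, θ ≤ w (t i) + r) : θ ≤ w (∑ i ∈ s, t i) + r := by
  have hθ : θ = θ + ((-r : ℝ) : Rbar) + r := by
    rw [add_assoc, ← WithTop.coe_add, neg_add_cancel, WithTop.coe_zero, add_zero]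
  rw [hθ, WithTop.add_le_add_iff_right WithTop.coe_ne_top]
  exact w.map_le_sum fun i hi =>
    (WithTop.add_le_add_iff_right WithTop.coe_ne_top).1 (hθ ▸ h i hi)

theorem one_lt_card_of_uniqueAdd_mem {G : Type*} [Add G] [TwoUniqueSums G] {A B S : Finset G}
    (hA : A.Nonempty) (hB : 1 < B.card) (h : ∀ a ∈ A, ∀ b ∈ B, UniqueAdd A B a b → a + b ∈ S) :
    1 < S.card := by
  obtain ⟨p, hp, q, hq, hpq, hup, huq⟩ :=
    TwoUniqueSums.uniqueAdd_of_one_lt_card (hB.trans_le (Nat.le_mul_of_pos_left _ hA.card_pos))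
  rw [Finset.mem_product] at hp hq
  refine Finset.one_lt_card.2 ⟨_, h _ hp.1 _ hp.2 hup, _, h _ hq.1 _ hq.2 huq, fun he => hpq ?_⟩
  exact (Prod.ext_iff.2 (hup hq.1 hq.2 he.symm)).symm

section TropicalMinimum

variable {K : Type} [Field K] {m : ℕ}

def tropWeight (ν : K → Rbar) (v : Fin m → ℝ) (g : Laur K m) (u : Fin m → ℤ) : Rbar :=
  ν (g.coeff u) + ((∑ i, (u i : ℝ) * v i : ℝ) : Rbar)

def tropArgmin (ν : K → Rbar) (v : Fin m → ℝ) (g : Laur K m) : Finset (Fin m → ℤ) :=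
  {u ∈ g.coeff.support | ∀ w ∈ g.coeff.support, tropWeight ν v g u ≤ tropWeight ν v g w}

variable {ν : K → Rbar} {v : Fin m → ℝ} {g F : Laur K m} {a b x y : Fin m → ℤ}

theorem mem_tropArgmin : a ∈ tropArgmin ν v g ↔
    a ∈ g.coeff.support ∧ ∀ w ∈ g.coeff.support, tropWeight ν v g a ≤ tropWeight ν v g w :=
  Finset.mem_filter

theorem minTwice_iff_one_lt_card_tropArgmin : MinTwice ν g v ↔ 1 < (tropArgmin ν v g).card := by
  rw [Finset.one_lt_card]
  constructor
  · rintro ⟨u, hu, u', hu', hne, heq, hmin⟩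
    exact ⟨u, mem_tropArgmin.2 ⟨hu, hmin⟩, u',
      mem_tropArgmin.2 ⟨hu', fun w hw => heq.symm.trans_le (hmin w hw)⟩, hne⟩
  · rintro ⟨u, hu, u', hu', hne⟩
    rw [mem_tropArgmin] at hu hu'
    exact ⟨u, hu.1, u', hu'.1, hne, le_antisymm (hu.2 u' hu'.1) (hu'.2 u hu.1), hu.2⟩

theorem tropArgmin_nonempty (hg : g ≠ 0) : (tropArgmin ν v g).Nonempty := by
  obtain ⟨u, hu, hmin⟩ := g.coeff.support.exists_min_image (tropWeight ν v g)
    (Finsupp.support_nonempty_iff.2 (AddMonoidAlgebra.coeff_eq_zero.not.2 hg))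
  exact ⟨u, mem_tropArgmin.2 ⟨hu, hmin⟩⟩

theorem tropArgmin_eq_support (htop : ∀ c, ν c = ⊤) : tropArgmin ν v g = g.coeff.support :=
  Finset.filter_true_of_mem fun u _ w _ => by simp [tropWeight, htop]

theorem tropWeight_lt_of_notMem_tropArgmin (ha : a ∈ tropArgmin ν v g)
    (hx : x ∈ g.coeff.support) (hx' : x ∉ tropArgmin ν v g) :
    tropWeight ν v g a < tropWeight ν v g x := by
  rw [mem_tropArgmin] at ha hx'
  push Not at hx'
  obtain ⟨w, hw, hlt⟩ := hx' hx
  exact (ha.2 w hw).trans_lt hlt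

theorem tropWeight_add_tropWeight (hmul : ∀ c d, ν (c * d) = ν c + ν d) :
    tropWeight ν v g x + tropWeight ν v F y
      = ν (g.coeff x * F.coeff y) + ((∑ i, ((x + y) i : ℝ) * v i : ℝ) : Rbar) := by
  simp only [tropWeight, hmul, Pi.add_apply, Int.cast_add, add_mul, Finset.sum_add_distrib,
    WithTop.coe_add]
  abel

section AddValuation

variable (w : AddValuation K Rbar)

theorem tropWeight_ne_top (hx : x ∈ g.coeff.support) : tropWeight w v g x ≠ ⊤ :=
  WithTop.add_ne_top.2 ⟨w.ne_top_iff.2 (Finsupp.mem_support_iff.1 hx), WithTop.coe_ne_top⟩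

theorem tropWeight_add_le_tropWeight_mul (ha : a ∈ tropArgmin w v g)
    (hb : b ∈ tropArgmin w v F) (z : Fin m → ℤ) :
    tropWeight w v g a + tropWeight w v F b ≤ tropWeight w v (g * F) z := by
  change _ ≤ w ((g * F).coeff z) + _
  rw [AddMonoidAlgebra.coeff_mul]
  refine w.le_map_sum_add_coe fun x hx => w.le_map_sum_add_coe fun y hy => ?_
  dsimp only
  split_ifs with hxy
  · rw [← hxy, ← tropWeight_add_tropWeight w.map_mul]
    exact add_le_add ((mem_tropArgmin.1 ha).2 x hx) ((mem_tropArgmin.1 hb).2 y hy)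
  · simp

theorem tropWeight_add_lt_of_notMem (ha : a ∈ tropArgmin w v g) (hb : b ∈ tropArgmin w v F)
    (hx : x ∈ g.coeff.support) (hy : y ∈ F.coeff.support)
    (hxy : x ∉ tropArgmin w v g ∨ y ∉ tropArgmin w v F) :
    tropWeight w v g a + tropWeight w v F b < tropWeight w v g x + tropWeight w v F y := by
  have ha' := mem_tropArgmin.1 ha
  have hb' := mem_tropArgmin.1 hb
  rcases hxy with hx' | hy'
  · exact WithTop.add_lt_add_of_lt_of_le (tropWeight_ne_top w hb'.1)
      (tropWeight_lt_of_notMem_tropArgmin ha hx hx') (hb'.2 y hy)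
  · exact WithTop.add_lt_add_of_le_of_lt (tropWeight_ne_top w ha'.1) (ha'.2 x hx)
      (tropWeight_lt_of_notMem_tropArgmin hb hy hy')

theorem tropWeight_mul_add_of_uniqueAdd (ha : a ∈ tropArgmin w v g) (hb : b ∈ tropArgmin w v F)
    (hu : UniqueAdd (tropArgmin w v g) (tropArgmin w v F) a b) :
    tropWeight w v (g * F) (a + b) = tropWeight w v g a + tropWeight w v F b := by
  have ha' := mem_tropArgmin.1 ha
  have hb' := mem_tropArgmin.1 hb
  set P := g.coeff.support ×ˢ F.coeff.support
  set t : (Fin m → ℤ) × (Fin m → ℤ) → K :=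
    fun p => if p.1 + p.2 = a + b then g.coeff p.1 * F.coeff p.2 else 0
  have hab : (a, b) ∈ P := Finset.mem_product.2 ⟨ha'.1, hb'.1⟩
  have htab : t (a, b) = g.coeff a * F.coeff b := if_pos rfl
  have htab_ne_top : w (t (a, b)) ≠ ⊤ := by
    rw [htab, w.ne_top_iff]
    exact mul_ne_zero (Finsupp.mem_support_iff.1 ha'.1) (Finsupp.mem_support_iff.1 hb'.1)
  have hcoeff : (g * F).coeff (a + b) = ∑ p ∈ P, t p := by
    rw [AddMonoidAlgebra.coeff_mul, Finsupp.sum, Finset.sum_product]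
    rfl
  have hdominant : ∀ p ∈ P.erase (a, b), w (t (a, b)) < w (t p) := by
    intro p hp
    obtain ⟨hne, hp⟩ := Finset.mem_erase.1 hp
    obtain ⟨hx, hy⟩ := Finset.mem_product.1 hp
    by_cases hsum : p.1 + p.2 = a + b
    · have hnot : p.1 ∉ tropArgmin w v g ∨ p.2 ∉ tropArgmin w v F := by
        by_contra! h
        exact hne (Prod.ext_iff.2 (hu h.1 h.2 hsum))
      have hlt := tropWeight_add_lt_of_notMem w ha hb hx hy hnot
      rw [tropWeight_add_tropWeight w.map_mul, tropWeight_add_tropWeight w.map_mul, hsum,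
        WithTop.add_lt_add_iff_right WithTop.coe_ne_top, ← htab] at hlt
      rwa [show t p = g.coeff p.1 * F.coeff p.2 from if_pos hsum]
    · simpa [t, hsum] using htab_ne_top.lt_top
  rw [tropWeight, hcoeff, ← Finset.add_sum_erase P t hab,
    w.map_add_eq_of_lt_left (w.map_lt_sum htab_ne_top hdominant), htab,
    tropWeight_add_tropWeight w.map_mul]

theorem add_mem_tropArgmin_mul (ha : a ∈ tropArgmin w v g) (hb : b ∈ tropArgmin w v F)
    (hu : UniqueAdd (tropArgmin w v g) (tropArgmin w v F) a b) :
    a + b ∈ tropArgmin w v (g * F) := by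
  have hweight := tropWeight_mul_add_of_uniqueAdd w ha hb hu
  refine mem_tropArgmin.2 ⟨Finsupp.mem_support_iff.2 fun h0 => ?_, fun z _ =>
    hweight ▸ tropWeight_add_le_tropWeight_mul w ha hb z⟩
  have htop : tropWeight w v (g * F) (a + b) = ⊤ := by simp [tropWeight, h0]
  exact WithTop.add_ne_top.2 ⟨tropWeight_ne_top w (mem_tropArgmin.1 ha).1,
    tropWeight_ne_top w (mem_tropArgmin.1 hb).1⟩ (hweight ▸ htop)

end AddValuation

theorem MinTwice.mul_left (hν : IsVal ν) (hg : g ≠ 0) (hF : MinTwice ν F v) :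
    MinTwice ν (g * F) v := by
  rw [minTwice_iff_one_lt_card_tropArgmin] at hF ⊢
  rcases hν.map_one_eq_zero_or_forall_eq_top with h1 | htop
  · exact one_lt_card_of_uniqueAdd_mem (tropArgmin_nonempty hg) hF
      fun a ha b hb hu => add_mem_tropArgmin_mul (hν.toAddValuation h1) ha hb hu
  · rw [tropArgmin_eq_support htop] at hF ⊢
    refine one_lt_card_of_uniqueAdd_mem (Finsupp.support_nonempty_iff.2
      (AddMonoidAlgebra.coeff_eq_zero.not.2 hg)) hF fun a ha b hb hu => ?_
    rw [Finsupp.mem_support_iff, AddMonoidAlgebra.coeff_mul_add_of_uniqueAdd hu]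
    exact mul_ne_zero (Finsupp.mem_support_iff.1 ha) (Finsupp.mem_support_iff.1 hb)

end TropicalMinimum

theorem MinTwice.laurExt {k K : Type} [Field k] [Field K] [Algebra k K] {νk : k → Rbar}
    {ν : K → Rbar} (hext : ∀ a : k, ν (algebraMap k K a) = νk a) {m : ℕ} {f : Laur k m}
    {v : Fin m → ℝ} (hf : MinTwice νk f v) : MinTwice ν (laurExt k K m f) v := by
  simpa only [MinTwice, support_laurExt, coeff_laurExt, hext] using hf

theorem stmt13_general {k K : Type} [Field k] [Field K]
    [Algebra k K]
    (νk : k → Rbar) (ν : K → Rbar) (hν : IsVal ν)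
    (hext : ∀ a : k, ν (algebraMap k K a) = νk a)
    (m : ℕ) (f : Laur k m) :
    Ttrop νk (Ideal.span {f}) ⊆ Ttrop ν (Ideal.span {laurExt k K m f}) := by
  intro v hv h hmem hh
  obtain ⟨c, rfl⟩ := Ideal.mem_span_singleton'.1 hmem
  have hf : f ≠ 0 := by
    rintro rfl
    simp at hh
  exact (MinTwice.laurExt hext (hv f (Ideal.mem_span_singleton_self f) hf)).mul_left hν
    (left_ne_zero_of_mul hh)

/-- Lemma A.2, hypersurface case.  Let `k ⊆ K` be algebraically
closed fields with valuations `ν_k` on `k` and `ν` on `K` extending `ν_k` (possibly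
trivial, no completeness assumed).  For every nonzero Laurent polynomial `f` over `k`,
the tropicalization of the hypersurface it defines over `k` is contained in the
tropicalization of the hypersurface it defines over `K`. -/
theorem stmt13 {k K : Type} [Field k] [Field K] [IsAlgClosed k] [IsAlgClosed K]
    [Algebra k K]
    (νk : k → Rbar) (ν : K → Rbar) (hνk : IsVal νk) (hν : IsVal ν)
    (hext : ∀ a : k, ν (algebraMap k K a) = νk a)
    (m : ℕ) (f : Laur k m) (hf : f ≠ 0) :
    Ttrop νk (Ideal.span {f}) ⊆ Ttrop ν (Ideal.span {laurExt k K m f}) :=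
  stmt13_general νk ν hν hext m f

end
end

section
/- Let K be an algebraically closed field with a nontrivial valuation ν (not necessarily complete), and let f = Σ_u a_u x^u be a nonzero Laurent polynomial in K[x_1^{±1}, ..., x_m^{±1}]. Define Ψ_f : ℝ^m → ℝ by Ψ_f(v) = min{⟨u, v⟩ + ν(a_u) : u ∈ supp(f)}. Then the closure in ℝ^m of {(ν(y_1), ..., ν(y_m)) : y ∈ (K*)^m, f(y) = 0} is contained in the corner locus of Ψ_f, i.e. in the set of v ∈ ℝ^m at which the minimum defining Ψ_f(v) is attained by at least two distinct u ∈ supp(f). -/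
open scoped BigOperators Classical

noncomputable section

/-! At a zero `y ∈ (K*)^m` of `f`, the terms `a_u y^u` have valuations
`ν(a_u) + ⟨u, trop y⟩`, and a vanishing sum cannot have a unique term of minimal valuation,
since by the ultrametric inequality that term would determine the valuation of the sum.
So `trop y` lies in the corner locus, which is closed, being a finite union of sets cut out by
finitely many non-strict inequalities between affine functions of `v`. -/

namespace AddValuation

variable {R Γ : Type*} [Ring R] [LinearOrderedAddCommMonoidWithTop Γ]

theorem exists_ne_min_eq_of_sum_eq_zero (v : AddValuation R Γ) {ι : Type*} {s : Finset ι}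
    {t : ι → R} (hs : s.Nonempty) (ht : ∀ i ∈ s, v (t i) ≠ ⊤) (hsum : ∑ i ∈ s, t i = 0) :
    ∃ i ∈ s, ∃ j ∈ s, i ≠ j ∧ v (t i) = v (t j) ∧ ∀ k ∈ s, v (t i) ≤ v (t k) := by
  obtain ⟨i, hi, hmin⟩ := s.exists_min_image (fun k => v (t k)) hs
  by_contra hunique
  have hrest : v (t i) < v (∑ k ∈ s.erase i, t k) :=
    v.map_lt_sum (ht i hi) fun k hk =>
      (hmin k (Finset.mem_of_mem_erase hk)).lt_of_ne fun h =>
        hunique ⟨i, hi, k, Finset.mem_of_mem_erase hk, (Finset.ne_of_mem_erase hk).symm, h, hmin⟩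
  have := v.map_add_eq_of_lt_left hrest
  rw [Finset.add_sum_erase s t hi, hsum, v.map_zero] at this
  exact ht i hi this.symm

end AddValuation

namespace IsVal

variable {K : Type} [Field K] {ν : K → Rbar}

theorem map_one_eq_zero (hν : IsVal ν) (h1 : ν 1 ≠ ⊤) : ν 1 = 0 := by
  have h := hν.map_mul 1 1
  rw [mul_one] at h
  lift ν 1 to ℝ using h1 with r
  have : r = r + r := by exact_mod_cast h
  rw [show r = 0 by linarith]
  rfl

theorem eq_top_of_map_one_eq_top (hν : IsVal ν) (h1 : ν 1 = ⊤) (a : K) : ν a = ⊤ := by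
  rw [← mul_one a, hν.map_mul, h1, add_top]

theorem coe_vR (hν : IsVal ν) (h1 : ν 1 = 0) {a : K} (ha : a ≠ 0) :
    ((vR ν a : ℝ) : Rbar) = ν a := by
  have : ν a ≠ ⊤ := ((hν.toAddValuation h1).ne_top_iff).2 ha
  unfold vR
  lift ν a to ℝ using this with r
  simp

theorem map_zpow (hν : IsVal ν) (h1 : ν 1 = 0) (y : Kˣ) (n : ℤ) :
    ν ((y : K) ^ n) = (((n : ℝ) * vR ν y : ℝ) : Rbar) := by
  set v := hν.toAddValuation h1
  have hy : v y = ((vR ν y : ℝ) : Rbar) := (hν.coe_vR h1 y.ne_zero).symm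
  obtain ⟨k, rfl | rfl⟩ := Int.eq_nat_or_neg n
  · change v _ = _
    rw [zpow_natCast, v.map_pow, hy, ← WithTop.coe_nsmul, nsmul_eq_mul]
    norm_cast
  · change v _ = _
    rw [zpow_neg, zpow_natCast, v.map_inv, v.map_pow, hy, ← WithTop.coe_nsmul,
      ← WithTop.LinearOrderedAddCommGroup.coe_neg, nsmul_eq_mul]
    congr 1
    push_cast
    ring

theorem map_prod (hν : IsVal ν) (h1 : ν 1 = 0) {ι : Type*} (s : Finset ι) (t : ι → K) :
    ν (∏ i ∈ s, t i) = ∑ i ∈ s, ν (t i) := by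
  induction s using Finset.induction_on with
  | empty => simpa using h1
  | insert a s ha ih => rw [Finset.prod_insert ha, Finset.sum_insert ha, hν.map_mul, ih]

theorem map_mul_prod_zpow (hν : IsVal ν) {m : ℕ} (c : K) (u : Fin m → ℤ) (y : Fin m → Kˣ) :
    ν (c * ∏ i, (y i : K) ^ u i) = ν c + ((∑ i, (u i : ℝ) * vR ν (y i) : ℝ) : Rbar) := by
  by_cases h1 : ν 1 = ⊤
  · simp [hν.eq_top_of_map_one_eq_top h1]
  · have h1 := hν.map_one_eq_zero h1
    rw [hν.map_mul, hν.map_prod h1, WithTop.coe_sum]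
    simp only [hν.map_zpow h1]

/-- `IsVal` also admits the degenerate `ν ≡ ⊤` (when `ν 1 = ⊤`); there every term has value `⊤`
and the claim only needs two indices, which a vanishing sum of nonzero terms provides. -/
theorem exists_ne_min_eq_of_sum_eq_zero (hν : IsVal ν) {ι : Type*} {s : Finset ι} {t : ι → K}
    (hs : s.Nonempty) (ht : ∀ i ∈ s, t i ≠ 0) (hsum : ∑ i ∈ s, t i = 0) :
    ∃ i ∈ s, ∃ j ∈ s, i ≠ j ∧ ν (t i) = ν (t j) ∧ ∀ k ∈ s, ν (t i) ≤ ν (t k) := by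
  by_cases h1 : ν 1 = ⊤
  · have htop := hν.eq_top_of_map_one_eq_top h1
    obtain ⟨i, hi⟩ := hs
    obtain ⟨j, hj, hji⟩ : ∃ j ∈ s, j ≠ i := by
      by_contra! hsingle
      rw [Finset.sum_eq_single_of_mem i hi fun j hj hne => (hne (hsingle j hj)).elim] at hsum
      exact ht i hi hsum
    exact ⟨i, hi, j, hj, hji.symm, by rw [htop, htop], fun k _ => by rw [htop, htop]⟩
  · exact (hν.toAddValuation (hν.map_one_eq_zero h1)).exists_ne_min_eq_of_sum_eq_zero hs
      (fun i hi => (AddValuation.ne_top_iff _).2 (ht i hi)) hsum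

end IsVal

theorem isClosed_setOf_add_coe_le {X : Type*} [TopologicalSpace X] (a b : WithTop ℝ)
    {f g : X → ℝ} (hf : Continuous f) (hg : Continuous g) :
    IsClosed {x | a + (f x : WithTop ℝ) ≤ b + g x} := by
  induction a with
  | top =>
    simp only [top_add, top_le_iff, WithTop.add_eq_top, WithTop.coe_ne_top, or_false]
    exact isClosed_const
  | coe a =>
    induction b with
    | top => simp only [top_add, le_top, Set.ofPred_true, isClosed_univ]
    | coe b =>
      simp only [← WithTop.coe_add, WithTop.coe_le_coe]
      exact isClosed_le (continuous_const.add hf) (continuous_const.add hg)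

theorem isClosed_setOf_minTwice {K : Type} [Field K] {m : ℕ} (ν : K → Rbar) (f : Laur K m) :
    IsClosed {v | MinTwice ν f v} := by
  let term (u : Fin m → ℤ) (v : Fin m → ℝ) : Rbar :=
    ν (f.coeff u) + ((∑ i, (u i : ℝ) * v i : ℝ) : Rbar)
  have hle (u w : Fin m → ℤ) : IsClosed {v | term u v ≤ term w v} :=
    isClosed_setOf_add_coe_le _ _ (by fun_prop) (by fun_prop)
  have hunion : {v | MinTwice ν f v} = ⋃ u ∈ f.coeff.support, ⋃ u' ∈ f.coeff.support,
      {_v | u ≠ u'} ∩ {v | term u v ≤ term u' v} ∩ {v | term u' v ≤ term u v} ∩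
        ⋂ w ∈ f.coeff.support, {v | term u v ≤ term w v} := by
    ext v
    simp only [MinTwice, le_antisymm_iff, Set.mem_iUnion, Set.mem_inter_iff, Set.mem_iInter,
      Set.mem_ofPred_eq, exists_prop, and_assoc, term]
  rw [hunion]
  exact isClosed_biUnion_finset fun u _ => isClosed_biUnion_finset fun u' _ =>
    ((isClosed_const.inter (hle u u')).inter (hle u' u)).inter
      (isClosed_biInter fun w _ => hle u w)

theorem stmt14_general {K : Type} [Field K]
    (ν : K → Rbar) (hν : IsVal ν)
    (m : ℕ) (f : Laur K m) (hf : f ≠ 0) :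
    closure {v : Fin m → ℝ | ∃ y : Fin m → Kˣ,
        lEval (fun i => ((y i : Kˣ) : K)) f = 0 ∧ v = fun i => vR ν ((y i : Kˣ) : K)}
      ⊆ {v : Fin m → ℝ | MinTwice ν f v} := by
  refine closure_minimal ?_ (isClosed_setOf_minTwice ν f)
  rintro _ ⟨y, hy, rfl⟩
  have hterm (u) (hu : u ∈ f.coeff.support) : f.coeff u * ∏ i, (y i : K) ^ u i ≠ 0 :=
    mul_ne_zero (Finsupp.mem_support_iff.mp hu)
      (Finset.prod_ne_zero_iff.mpr fun i _ => zpow_ne_zero _ (y i).ne_zero)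
  have hsupp : f.coeff.support.Nonempty := Finsupp.support_nonempty_iff.mpr (by simpa using hf)
  have hmin := hν.exists_ne_min_eq_of_sum_eq_zero hsupp hterm hy
  simp only [hν.map_mul_prod_zpow] at hmin
  exact hmin

/-- easy half of Kapranov's theorem.  Let `K` be algebraically closed
with a nontrivial valuation `ν` (not necessarily complete), and let `f` be a nonzero
Laurent polynomial.  Then the closure in `ℝ^m` of the coordinatewise valuations of the
zeros of `f` in `(K*)^m` is contained in the corner locus of
`Ψ_f(v) = min {⟨u, v⟩ + ν(a_u) : u ∈ supp f}`, i.e. in the set of `v` at which the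
minimum is attained by at least two distinct `u ∈ supp f`. -/
theorem stmt14 {K : Type} [Field K] [IsAlgClosed K]
    (ν : K → Rbar) (hν : IsVal ν) (hnt : IsNontrivialVal ν)
    (m : ℕ) (f : Laur K m) (hf : f ≠ 0) :
    closure {v : Fin m → ℝ | ∃ y : Fin m → Kˣ,
        lEval (fun i => ((y i : Kˣ) : K)) f = 0 ∧ v = fun i => vR ν ((y i : Kˣ) : K)}
      ⊆ {v : Fin m → ℝ | MinTwice ν f v} :=
  stmt14_general ν hν m f hf

end
end
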